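/- Let ρ1, ρ2 ∈ (0,1), let n ≥ 1 and m = 2n, and let m1, m2 be positive integers with m1 + m2 = m and |m1 − m·log ρ2/(log ρ1 + log ρ2)| ≤ 1/2. Set ρ = exp( (log ρ1 · log ρ2)/(log ρ1 + log ρ2) ). Let Z1 be a monic polynomial of degree m1 with real coefficients, all roots in [√(−b1), √(−a1)], and sup_{u ∈ [√(−b1),√(−a1)]} |Z1(u)/Z1(−u)| ≤ 2·ρ1^{m1}; let Z2 be a monic polynomial of degree m2 with real coefficients, all roots in [√(a2), √(b2)], and sup_{u ∈ [√(a2),√(b2)]} |Z2(u)/Z2(−u)| ≤ 2·ρ2^{m2}. Define H(s) = Z1(−i s)·Z2(s) and let P, Q be the unique complex polynomials with deg P ≤ n−1, deg Q ≤ n and H(s) = −s·P(s²) + Q(s²) for all s. If 2·max{ρ1^{−1/2}, ρ2^{−1/2}}·ρ^m < 1, then for every z ∈ K one has Q(z) ≠ 0 and |P(z)/(Q(z)·F(z)) − 1| ≤ 4·max{ρ1^{−1/2}, ρ2^{−1/2}}·ρ^m / (1 − 2·max{ρ1^{−1/2}, ρ2^{−1/2}}·ρ^m). -/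

import Mathlib

/-- The limiting-absorption branch of the inverse square root on the nonzero reals:
`F(z) = z^{−1/2}` for `z > 0` and `F(z) = −i·(−z)^{−1/2}` for `z < 0`. -/
noncomputable def Fbranch (z : ℝ) : ℂ :=
  if 0 < z then ((Real.sqrt z : ℂ))⁻¹ else -Complex.I * ((Real.sqrt (-z) : ℂ))⁻¹

/-!
For `z ∈ K` pick `s` with `s ^ 2 = z` and `F z = s⁻¹`, namely `s = √z` or `s = i√(-z)`. Then
`H s = -s P(z) + Q(z)` and `H (-s) = s P(z) + Q(z)`, so
`s P(z) / Q(z) - 1 = -2 H(s) / (H(s) + H(-s))`, and everything follows from `|H s| ≤ ε |H (-s)|`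
with `ε = 2 max(ρ1^{-1/2}, ρ2^{-1/2}) ρ^m < 1`. In `H(s) / H(-s)` one factor of `H` is evaluated
at the real points `±√|z|`, where the sup hypothesis bounds the ratio by `2 ρⱼ^{mⱼ}`, and the other
at a pair of complex conjugate points, where a real polynomial has equal moduli. The balance
condition on `m1` makes `ρⱼ^{mⱼ} ≤ ρⱼ^{-1/2} ρ^m` for both `j`.
-/

open Polynomial Complex Set

theorem ne_zero_and_norm_div_sub_one_le {s p q : ℂ} {ε : ℝ} (hε : ε < 1)
    (hne : s * p + q ≠ 0) (hle : ‖-s * p + q‖ ≤ ε * ‖s * p + q‖) :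
    q ≠ 0 ∧ ‖p / (q * s⁻¹) - 1‖ ≤ 2 * ε / (1 - ε) := by
  have hB : 0 < ‖s * p + q‖ := norm_pos_iff.2 hne
  have hsum : (1 - ε) * ‖s * p + q‖ ≤ ‖2 * q‖ := by
    have : ‖s * p + q‖ ≤ ‖2 * q‖ + ‖-s * p + q‖ := by
      calc ‖s * p + q‖ = ‖2 * q - (-s * p + q)‖ := by ring_nf
        _ ≤ _ := norm_sub_le _ _
    linarith
  have hlow : 0 < (1 - ε) * ‖s * p + q‖ := mul_pos (by linarith) hB
  have hq : q ≠ 0 := by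
    rintro rfl
    simp only [mul_zero, norm_zero] at hsum
    linarith
  refine ⟨hq, ?_⟩
  have hid : p / (q * s⁻¹) - 1 = -2 * (-s * p + q) / (2 * q) := by
    rcases eq_or_ne s 0 with rfl | hs
    · field_simp; simp
    · field_simp; ring
  rw [hid, norm_div, norm_mul, norm_neg, RCLike.norm_two]
  calc 2 * ‖-s * p + q‖ / ‖2 * q‖ ≤ 2 * (ε * ‖s * p + q‖) / ((1 - ε) * ‖s * p + q‖) :=
        div_le_div₀ (by linarith [norm_nonneg (-s * p + q)]) (by linarith) hlow hsum
    _ = 2 * ε / (1 - ε) := by rw [← mul_assoc, mul_div_mul_right _ _ hB.ne']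

theorem abs_le_mul_abs_of_sSup_abs_div_le {f g : ℝ → ℝ} {S : Set ℝ} {C : ℝ} (hS : IsCompact S)
    (hf : ContinuousOn f S) (hg : ContinuousOn g S) (hg0 : ∀ u ∈ S, g u ≠ 0)
    (hC : sSup ((fun u => |f u / g u|) '' S) ≤ C) {s : ℝ} (hs : s ∈ S) :
    |f s| ≤ C * |g s| := by
  have hbdd : BddAbove ((fun u => |f u / g u|) '' S) :=
    (hS.image_of_continuousOn (hf.div hg hg0).abs).bddAbove
  have hle : |f s / g s| ≤ C := (le_csSup hbdd ⟨s, hs, rfl⟩).trans hC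
  rwa [abs_div, div_le_iff₀ (abs_pos.2 (hg0 s hs))] at hle

theorem Real.pow_le_rpow_neg_half_mul_exp_pow {r1 r2 : ℝ} (hr0 : 0 < r1) (hr1 : r1 ≤ 1) {m N : ℕ}
    (h : N * Real.log r2 / (Real.log r1 + Real.log r2) - 1 / 2 ≤ m) :
    r1 ^ m ≤ r1 ^ (-(1 / 2) : ℝ) *
      Real.exp (Real.log r1 * Real.log r2 / (Real.log r1 + Real.log r2)) ^ N := by
  have hlog : Real.log r1 ≤ 0 := Real.log_nonpos hr0.le hr1
  calc r1 ^ m = Real.exp (Real.log r1 * m) := by rw [← Real.rpow_natCast, Real.rpow_def_of_pos hr0]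
    _ ≤ Real.exp (Real.log r1 * (-(1 / 2)) +
          N * (Real.log r1 * Real.log r2 / (Real.log r1 + Real.log r2))) := by
      rw [Real.exp_le_exp]
      have := mul_le_mul_of_nonpos_left h hlog
      linarith [show (N : ℝ) * (Real.log r1 * Real.log r2 / (Real.log r1 + Real.log r2)) =
        Real.log r1 * (N * Real.log r2 / (Real.log r1 + Real.log r2)) by ring]
    _ = _ := by rw [Real.exp_add, Real.exp_nat_mul, ← Real.rpow_def_of_pos hr0]

open ComplexConjugate

namespace Polynomial

theorem aeval_complexOfReal (p : ℝ[X]) (x : ℝ) : aeval (x : ℂ) p = p.eval x :=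
  aeval_ofReal p x

theorem norm_aeval_conj (p : ℝ[X]) (w : ℂ) : ‖aeval (conj w) p‖ = ‖aeval w p‖ := by
  rw [aeval_conj, Complex.norm_conj]

section RealRoots

variable {p : ℝ[X]} {lo hi : ℝ}
  (hroots : ∀ z : ℂ, aeval z p = 0 → ∃ x ∈ Icc lo hi, z = (x : ℂ))
include hroots

theorem aeval_ne_zero_of_im_ne_zero {w : ℂ} (hw : w.im ≠ 0) : aeval w p ≠ 0 := fun h => by
  obtain ⟨x, -, rfl⟩ := hroots w h
  exact hw (ofReal_im x)

theorem eval_ne_zero_of_lt {u : ℝ} (hu : u < lo) : p.eval u ≠ 0 := fun h => by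
  obtain ⟨x, hx, hux⟩ := hroots u (by rw [aeval_complexOfReal, h, ofReal_zero])
  exact hu.not_ge (ofReal_injective hux ▸ hx.1)

theorem abs_eval_le_mul_abs_eval_neg {C : ℝ} (hlo : 0 < lo)
    (hC : sSup ((fun u : ℝ => |p.eval u / p.eval (-u)|) '' Icc lo hi) ≤ C)
    {t : ℝ} (ht : t ∈ Icc lo hi) : |p.eval t| ≤ C * |p.eval (-t)| :=
  abs_le_mul_abs_of_sSup_abs_div_le isCompact_Icc p.continuous.continuousOn
    (p.continuous.comp continuous_neg).continuousOn
    (fun u hu => eval_ne_zero_of_lt hroots (by linarith [hu.1])) hC ht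

end RealRoots

section Split

variable {Z1 Z2 : ℝ[X]} {P Q : ℂ[X]}
  (hsplit : ∀ s : ℂ, aeval (-(I * s)) Z1 * aeval s Z2 = -s * P.eval (s ^ 2) + Q.eval (s ^ 2))
include hsplit

theorem eval_sq_ne_zero_and_norm_div_sub_one_le {s : ℂ} {ε : ℝ} (hε : ε < 1)
    (hne : aeval (I * s) Z1 * aeval (-s) Z2 ≠ 0)
    (hle : ‖aeval (-(I * s)) Z1 * aeval s Z2‖ ≤ ε * ‖aeval (I * s) Z1 * aeval (-s) Z2‖) :
    Q.eval (s ^ 2) ≠ 0 ∧ ‖P.eval (s ^ 2) / (Q.eval (s ^ 2) * s⁻¹) - 1‖ ≤ 2 * ε / (1 - ε) := by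
  have hminus := hsplit (-s)
  rw [neg_sq, mul_neg, neg_neg, neg_neg] at hminus
  rw [hminus] at hne hle
  rw [hsplit s] at hle
  exact ne_zero_and_norm_div_sub_one_le hε hne hle

theorem eval_ne_zero_and_norm_Fbranch_le_at_neg_sq {t c : ℝ} (ht : 0 < t) (hc : c < 1)
    (hZ1 : |Z1.eval t| ≤ c * |Z1.eval (-t)|) (hZ1ne : Z1.eval (-t) ≠ 0)
    (hZ2 : ∀ w : ℂ, w.im ≠ 0 → aeval w Z2 ≠ 0) :
    Q.eval ((-t ^ 2 : ℝ) : ℂ) ≠ 0 ∧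
      ‖P.eval ((-t ^ 2 : ℝ) : ℂ) / (Q.eval ((-t ^ 2 : ℝ) : ℂ) * Fbranch (-t ^ 2)) - 1‖ ≤
        2 * c / (1 - c) := by
  have hs : (I * t) ^ 2 = ((-t ^ 2 : ℝ) : ℂ) := by push_cast; rw [mul_pow, I_sq]; ring
  have hF : Fbranch (-t ^ 2) = (I * t)⁻¹ := by
    rw [Fbranch, if_neg (by nlinarith), neg_neg, Real.sqrt_sq ht.le, mul_inv, inv_I]
  have hIs : I * (I * t) = -t := by rw [← mul_assoc, I_mul_I, neg_one_mul]
  have hconj : -(I * t) = conj (I * t) := by simp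
  rw [← hs, hF]
  refine eval_sq_ne_zero_and_norm_div_sub_one_le hsplit hc ?_ ?_
  · rw [hIs, ← ofReal_neg, aeval_complexOfReal]
    exact mul_ne_zero (ofReal_ne_zero.2 hZ1ne) (hZ2 _ (by simp [ht.ne']))
  · rw [hIs, neg_neg, ← ofReal_neg, aeval_complexOfReal, aeval_complexOfReal, norm_mul, norm_mul,
      hconj, norm_aeval_conj, norm_real, norm_real, Real.norm_eq_abs, Real.norm_eq_abs, ← mul_assoc]
    exact mul_le_mul_of_nonneg_right hZ1 (norm_nonneg _)

theorem eval_ne_zero_and_norm_Fbranch_le_at_sq {t c : ℝ} (ht : 0 < t) (hc : c < 1)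
    (hZ2 : |Z2.eval t| ≤ c * |Z2.eval (-t)|) (hZ2ne : Z2.eval (-t) ≠ 0)
    (hZ1 : ∀ w : ℂ, w.im ≠ 0 → aeval w Z1 ≠ 0) :
    Q.eval ((t ^ 2 : ℝ) : ℂ) ≠ 0 ∧
      ‖P.eval ((t ^ 2 : ℝ) : ℂ) / (Q.eval ((t ^ 2 : ℝ) : ℂ) * Fbranch (t ^ 2)) - 1‖ ≤
        2 * c / (1 - c) := by
  have hF : Fbranch (t ^ 2) = (t : ℂ)⁻¹ := by
    rw [Fbranch, if_pos (by positivity), Real.sqrt_sq ht.le]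
  have hconj : -(I * t) = conj (I * t) := by simp
  rw [ofReal_pow, hF]
  refine eval_sq_ne_zero_and_norm_div_sub_one_le hsplit hc ?_ ?_
  · rw [← ofReal_neg, aeval_complexOfReal]
    exact mul_ne_zero (hZ1 _ (by simp [ht.ne'])) (ofReal_ne_zero.2 hZ2ne)
  · rw [← ofReal_neg, aeval_complexOfReal, aeval_complexOfReal, norm_mul, norm_mul, hconj,
      norm_aeval_conj, norm_real, norm_real, Real.norm_eq_abs, Real.norm_eq_abs, mul_left_comm]
    exact mul_le_mul_of_nonneg_left hZ2 (norm_nonneg _)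

end Split

end Polynomial

theorem Real.pow_le_max_mul_exp_pow_of_balanced {r1 r2 : ℝ} (hr1 : r1 ∈ Ioo 0 1)
    (hr2 : r2 ∈ Ioo 0 1) {m1 m2 N : ℕ} (hm : m1 + m2 = N)
    (hbal : |(m1 : ℝ) - N * Real.log r2 / (Real.log r1 + Real.log r2)| ≤ 1 / 2) :
    let M := max (r1 ^ (-(1 / 2) : ℝ)) (r2 ^ (-(1 / 2) : ℝ))
    let ρ := Real.exp (Real.log r1 * Real.log r2 / (Real.log r1 + Real.log r2))
    r1 ^ m1 ≤ M * ρ ^ N ∧ r2 ^ m2 ≤ M * ρ ^ N := by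
  intro M ρ
  have hsum : Real.log r1 + Real.log r2 ≠ 0 :=
    (add_neg (Real.log_neg hr1.1 hr1.2) (Real.log_neg hr2.1 hr2.2)).ne
  have hρ : 0 ≤ ρ ^ N := by positivity
  obtain ⟨hlow, hup⟩ := abs_le.1 hbal
  constructor
  · calc r1 ^ m1 ≤ r1 ^ (-(1 / 2) : ℝ) * ρ ^ N :=
          Real.pow_le_rpow_neg_half_mul_exp_pow hr1.1 hr1.2.le (by linarith)
      _ ≤ M * ρ ^ N := mul_le_mul_of_nonneg_right (le_max_left _ _) hρ
  · have hsplitN : (N : ℝ) * Real.log r1 / (Real.log r2 + Real.log r1) =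
        N - N * Real.log r2 / (Real.log r1 + Real.log r2) := by
      rw [add_comm]; field_simp; ring
    have hm' : (m1 : ℝ) + m2 = N := by exact_mod_cast hm
    have hρ' : ρ = Real.exp (Real.log r2 * Real.log r1 / (Real.log r2 + Real.log r1)) := by
      rw [mul_comm, add_comm]
    calc r2 ^ m2 ≤ r2 ^ (-(1 / 2) : ℝ) * ρ ^ N := by
          rw [hρ']
          exact Real.pow_le_rpow_neg_half_mul_exp_pow hr2.1 hr2.2.le (by linarith)
      _ ≤ M * ρ ^ N := mul_le_mul_of_nonneg_right (le_max_right _ _) hρ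

theorem stmt6_general (a1 b1 a2 b2 : ℝ) (hb1 : b1 < 0) (ha2 : 0 < a2)
    (ρ1 ρ2 : ℝ) (hρ1 : ρ1 ∈ Set.Ioo (0 : ℝ) 1) (hρ2 : ρ2 ∈ Set.Ioo (0 : ℝ) 1)
    (n : ℕ) (m1 m2 : ℕ) (hm : m1 + m2 = 2 * n)
    (hbal : |(m1 : ℝ) - (2 * n : ℕ) * Real.log ρ2 / (Real.log ρ1 + Real.log ρ2)| ≤ 1 / 2)
    (ρ : ℝ) (hρ : ρ = Real.exp (Real.log ρ1 * Real.log ρ2 / (Real.log ρ1 + Real.log ρ2)))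
    (Z1 Z2 : Polynomial ℝ)
    (hZ1roots : ∀ z : ℂ, Polynomial.aeval z Z1 = 0 →
      ∃ x ∈ Set.Icc (Real.sqrt (-b1)) (Real.sqrt (-a1)), z = (x : ℂ))
    (hZ1sup : sSup ((fun u : ℝ => |Z1.eval u / Z1.eval (-u)|) ''
      Set.Icc (Real.sqrt (-b1)) (Real.sqrt (-a1))) ≤ 2 * ρ1 ^ m1)
    (hZ2roots : ∀ z : ℂ, Polynomial.aeval z Z2 = 0 →
      ∃ x ∈ Set.Icc (Real.sqrt a2) (Real.sqrt b2), z = (x : ℂ))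
    (hZ2sup : sSup ((fun u : ℝ => |Z2.eval u / Z2.eval (-u)|) ''
      Set.Icc (Real.sqrt a2) (Real.sqrt b2)) ≤ 2 * ρ2 ^ m2)
    (P Q : Polynomial ℂ)
    (hsplit : ∀ s : ℂ,
      (Z1.map (algebraMap ℝ ℂ)).eval (-(Complex.I * s)) * (Z2.map (algebraMap ℝ ℂ)).eval s =
        -s * P.eval (s ^ 2) + Q.eval (s ^ 2))
    (hcond : 2 * max (ρ1 ^ (-(1 / 2) : ℝ)) (ρ2 ^ (-(1 / 2) : ℝ)) * ρ ^ (2 * n) < 1) :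
    ∀ z ∈ Set.Icc a1 b1 ∪ Set.Icc a2 b2,
      Q.eval (z : ℂ) ≠ 0 ∧
      ‖P.eval (z : ℂ) / (Q.eval (z : ℂ) * Fbranch z) - 1‖ ≤
        4 * max (ρ1 ^ (-(1 / 2) : ℝ)) (ρ2 ^ (-(1 / 2) : ℝ)) * ρ ^ (2 * n) /
          (1 - 2 * max (ρ1 ^ (-(1 / 2) : ℝ)) (ρ2 ^ (-(1 / 2) : ℝ)) * ρ ^ (2 * n)) := by
  simp only [eval_map_algebraMap] at hsplit
  set ε := 2 * max (ρ1 ^ (-(1 / 2) : ℝ)) (ρ2 ^ (-(1 / 2) : ℝ)) * ρ ^ (2 * n)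
  obtain ⟨hpow1, hpow2⟩ := hρ ▸ Real.pow_le_max_mul_exp_pow_of_balanced hρ1 hρ2 hm hbal
  have hZ1bound : 2 * ρ1 ^ m1 ≤ ε := by simp only [ε]; linarith
  have hZ2bound : 2 * ρ2 ^ m2 ≤ ε := by simp only [ε]; linarith
  rw [show 4 * max (ρ1 ^ (-(1 / 2) : ℝ)) (ρ2 ^ (-(1 / 2) : ℝ)) * ρ ^ (2 * n) = 2 * ε by ring]
  rintro z (hz | hz)
  · obtain ⟨t, ht, rfl⟩ : ∃ t ∈ Set.Icc (Real.sqrt (-b1)) (Real.sqrt (-a1)), z = -t ^ 2 :=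
      ⟨Real.sqrt (-z),
        ⟨Real.sqrt_le_sqrt (by linarith [hz.2]), Real.sqrt_le_sqrt (by linarith [hz.1])⟩,
        by rw [Real.sq_sqrt (by linarith [hz.2]), neg_neg]⟩
    have hlo : 0 < Real.sqrt (-b1) := Real.sqrt_pos.2 (neg_pos.2 hb1)
    exact eval_ne_zero_and_norm_Fbranch_le_at_neg_sq hsplit (hlo.trans_le ht.1) hcond
      ((abs_eval_le_mul_abs_eval_neg hZ1roots hlo hZ1sup ht).trans
        (mul_le_mul_of_nonneg_right hZ1bound (abs_nonneg _)))
      (eval_ne_zero_of_lt hZ1roots (by linarith [ht.1]))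
      (fun _ => aeval_ne_zero_of_im_ne_zero hZ2roots)
  · obtain ⟨t, ht, rfl⟩ : ∃ t ∈ Set.Icc (Real.sqrt a2) (Real.sqrt b2), z = t ^ 2 :=
      ⟨Real.sqrt z, ⟨Real.sqrt_le_sqrt hz.1, Real.sqrt_le_sqrt hz.2⟩,
        by rw [Real.sq_sqrt (by linarith [hz.1])]⟩
    have hlo : 0 < Real.sqrt a2 := Real.sqrt_pos.2 ha2
    exact eval_ne_zero_and_norm_Fbranch_le_at_sq hsplit (hlo.trans_le ht.1) hcond
      ((abs_eval_le_mul_abs_eval_neg hZ2roots hlo hZ2sup ht).trans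
        (mul_le_mul_of_nonneg_right hZ2bound (abs_nonneg _)))
      (eval_ne_zero_of_lt hZ2roots (by linarith [ht.1]))
      (fun _ => aeval_ne_zero_of_im_ne_zero hZ1roots)

theorem stmt6 (a1 b1 a2 b2 : ℝ) (hab1 : a1 < b1) (hb1 : b1 < 0) (ha2 : 0 < a2)
    (hab2 : a2 < b2) (ρ1 ρ2 : ℝ) (hρ1 : ρ1 ∈ Set.Ioo (0 : ℝ) 1) (hρ2 : ρ2 ∈ Set.Ioo (0 : ℝ) 1)
    (n : ℕ) (hn : 1 ≤ n) (m1 m2 : ℕ) (hm1 : 0 < m1) (hm2 : 0 < m2) (hm : m1 + m2 = 2 * n)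
    (hbal : |(m1 : ℝ) - (2 * n : ℕ) * Real.log ρ2 / (Real.log ρ1 + Real.log ρ2)| ≤ 1 / 2)
    (ρ : ℝ) (hρ : ρ = Real.exp (Real.log ρ1 * Real.log ρ2 / (Real.log ρ1 + Real.log ρ2)))
    (Z1 Z2 : Polynomial ℝ)
    (hZ1monic : Z1.Monic) (hZ1deg : Z1.natDegree = m1)
    (hZ1roots : ∀ z : ℂ, Polynomial.aeval z Z1 = 0 →
      ∃ x ∈ Set.Icc (Real.sqrt (-b1)) (Real.sqrt (-a1)), z = (x : ℂ))
    (hZ1sup : sSup ((fun u : ℝ => |Z1.eval u / Z1.eval (-u)|) ''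
      Set.Icc (Real.sqrt (-b1)) (Real.sqrt (-a1))) ≤ 2 * ρ1 ^ m1)
    (hZ2monic : Z2.Monic) (hZ2deg : Z2.natDegree = m2)
    (hZ2roots : ∀ z : ℂ, Polynomial.aeval z Z2 = 0 →
      ∃ x ∈ Set.Icc (Real.sqrt a2) (Real.sqrt b2), z = (x : ℂ))
    (hZ2sup : sSup ((fun u : ℝ => |Z2.eval u / Z2.eval (-u)|) ''
      Set.Icc (Real.sqrt a2) (Real.sqrt b2)) ≤ 2 * ρ2 ^ m2)
    (P Q : Polynomial ℂ) (hPdeg : P.degree ≤ (n - 1 : ℕ)) (hQdeg : Q.degree ≤ (n : ℕ))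
    (hsplit : ∀ s : ℂ,
      (Z1.map (algebraMap ℝ ℂ)).eval (-(Complex.I * s)) * (Z2.map (algebraMap ℝ ℂ)).eval s =
        -s * P.eval (s ^ 2) + Q.eval (s ^ 2))
    (hcond : 2 * max (ρ1 ^ (-(1 / 2) : ℝ)) (ρ2 ^ (-(1 / 2) : ℝ)) * ρ ^ (2 * n) < 1) :
    ∀ z ∈ Set.Icc a1 b1 ∪ Set.Icc a2 b2,
      Q.eval (z : ℂ) ≠ 0 ∧
      ‖P.eval (z : ℂ) / (Q.eval (z : ℂ) * Fbranch z) - 1‖ ≤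
        4 * max (ρ1 ^ (-(1 / 2) : ℝ)) (ρ2 ^ (-(1 / 2) : ℝ)) * ρ ^ (2 * n) /
          (1 - 2 * max (ρ1 ^ (-(1 / 2) : ℝ)) (ρ2 ^ (-(1 / 2) : ℝ)) * ρ ^ (2 * n)) :=
  stmt6_general a1 b1 a2 b2 hb1 ha2 ρ1 ρ2 hρ1 hρ2 n m1 m2 hm hbal ρ hρ Z1 Z2 hZ1roots hZ1sup
    hZ2roots hZ2sup P Q hsplit hcond
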